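/- arXiv:1501.01208 — 2 statements merged into one kernel-verified Lean document; each statement's English description precedes it below -/
import Mathlib

section
/- Consider the simple regression model y = xβ₀ + e with x and e independent real random variables, E[e] = 0, E[x²] > 0, finite second moments, λ ≥ 0; let H₀ be the distribution of (x, y). Define the lasso functional L(H) = sign(E_H[xy])·max(|E_H[xy]|/E_H[x²] − λ/E_H[x²], 0), fix (x₀, y₀) and let H_ε = (1 − ε)H₀ + ε·δ_{(x₀,y₀)}. Then: (i) if |β₀| < λ/E_{H₀}[x²], the map ε ↦ L(H_ε) is constantly 0 in a right-neighborhood of 0, so its derivative at 0 equals 0; (ii) if |β₀| > λ/E_{H₀}[x²], the map ε ↦ L(H_ε) is differentiable at 0 with derivative x₀(y₀ − β₀x₀)/E_{H₀}[x²] − λ·(E_{H₀}[x²] − x₀²)/(E_{H₀}[x²])²·sign(β₀). -/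
open MeasureTheory ProbabilityTheory Filter Topology

/-! Under `H₀` the two moments are `E[xy] = β₀ E[x²]` (by independence and `E[e] = 0`) and
`E[x²]`, and under the contamination `H_ε` both move affinely in `ε`. The lasso functional is
`S_λ(E[xy]) / E[x²]` with `S_λ` the soft-thresholding operator, which vanishes near any `a` with
`|a| < λ` and is a translate of the identity near any `a` with `λ < |a|`; the quotient rule then
gives the derivative. -/

noncomputable def softThreshold (lam a : ℝ) : ℝ := Real.sign a * max (|a| - lam) 0

lemma Real.sign_mul_of_pos {a c : ℝ} (hc : 0 < c) : Real.sign (a * c) = Real.sign a := by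
  rcases lt_trichotomy a 0 with ha | rfl | ha
  · rw [Real.sign_of_neg ha, Real.sign_of_neg (mul_neg_of_neg_of_pos ha hc)]
  · simp
  · rw [Real.sign_of_pos ha, Real.sign_of_pos (mul_pos ha hc)]

lemma Real.eventually_sign_eq {a : ℝ} (ha : a ≠ 0) : ∀ᶠ b in 𝓝 a, Real.sign b = Real.sign a := by
  rcases ha.lt_or_gt with ha | ha
  · filter_upwards [eventually_lt_nhds ha] with b hb
    rw [Real.sign_of_neg hb, Real.sign_of_neg ha]
  · filter_upwards [eventually_gt_nhds ha] with b hb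
    rw [Real.sign_of_pos hb, Real.sign_of_pos ha]

lemma Real.sign_mul_abs (a : ℝ) : Real.sign a * |a| = a := by
  rcases lt_trichotomy a 0 with ha | rfl | ha
  · rw [Real.sign_of_neg ha, abs_of_neg ha, neg_one_mul, neg_neg]
  · simp
  · rw [Real.sign_of_pos ha, abs_of_pos ha, one_mul]

lemma softThreshold_of_abs_le {lam a : ℝ} (h : |a| ≤ lam) : softThreshold lam a = 0 := by
  rw [softThreshold, max_eq_right (by linarith), mul_zero]

lemma softThreshold_of_le_abs {lam a : ℝ} (h : lam ≤ |a|) :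
    softThreshold lam a = a - Real.sign a * lam := by
  rw [softThreshold, max_eq_left (by linarith), mul_sub, Real.sign_mul_abs]

lemma softThreshold_eventuallyEq_zero {lam a : ℝ} (h : |a| < lam) :
    softThreshold lam =ᶠ[𝓝 a] 0 := by
  filter_upwards [(continuous_abs.tendsto a).eventually (eventually_lt_nhds h)] with b hb
  exact softThreshold_of_abs_le hb.le

lemma hasDerivAt_softThreshold {lam a : ℝ} (hlam : 0 ≤ lam) (h : lam < |a|) :
    HasDerivAt (softThreshold lam) 1 a := by
  have ha : a ≠ 0 := abs_pos.mp (hlam.trans_lt h)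
  have hnear : softThreshold lam =ᶠ[𝓝 a] fun b => b - Real.sign a * lam := by
    filter_upwards [Real.eventually_sign_eq ha,
      (continuous_abs.tendsto a).eventually (eventually_gt_nhds h)] with b hsign habs
    rw [softThreshold_of_le_abs habs.le, hsign]
  exact ((hasDerivAt_id a).sub_const _).congr_of_eventuallyEq hnear

lemma integral_contamination {α E : Type*} [MeasurableSpace α] [MeasurableSingletonClass α]
    [NormedAddCommGroup E] [NormedSpace ℝ E] [CompleteSpace E] {ν : Measure α} {g : α → E}
    (hg : Integrable g ν) (p : α) {ε : ℝ} (hε₀ : 0 ≤ ε) (hε₁ : ε ≤ 1) :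
    ∫ z, g z ∂(ENNReal.ofReal (1 - ε) • ν + ENNReal.ofReal ε • Measure.dirac p) =
      AffineMap.lineMap (∫ z, g z ∂ν) (g p) ε := by
  have hgp : Integrable g (Measure.dirac p) := integrable_dirac enorm_lt_top
  rw [integral_add_measure (hg.smul_measure ENNReal.ofReal_ne_top)
      (hgp.smul_measure ENNReal.ofReal_ne_top), integral_smul_measure, integral_smul_measure,
    integral_dirac, ENNReal.toReal_ofReal (sub_nonneg.mpr hε₁), ENNReal.toReal_ofReal hε₀,
    AffineMap.lineMap_apply_module]

noncomputable def lasso (lam : ℝ) (ν : Measure (ℝ × ℝ)) : ℝ :=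
  Real.sign (∫ z, z.1 * z.2 ∂ν) *
    max (|∫ z, z.1 * z.2 ∂ν| / (∫ z, z.1 ^ 2 ∂ν) - lam / (∫ z, z.1 ^ 2 ∂ν)) 0

lemma lasso_eq_softThreshold_div {lam : ℝ} {ν : Measure (ℝ × ℝ)} (hν : 0 < ∫ z, z.1 ^ 2 ∂ν) :
    lasso lam ν = softThreshold lam (∫ z, z.1 * z.2 ∂ν) / ∫ z, z.1 ^ 2 ∂ν := by
  rw [lasso, softThreshold, ← sub_div, mul_div_assoc, ← max_div_div_right hν.le, zero_div]

lemma lasso_contamination_eventuallyEq (lam : ℝ) {H : Measure (ℝ × ℝ)}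
    (hxy : Integrable (fun z : ℝ × ℝ => z.1 * z.2) H)
    (hxx : Integrable (fun z : ℝ × ℝ => z.1 ^ 2) H)
    (hH : 0 < ∫ z, z.1 ^ 2 ∂H) (p : ℝ × ℝ) :
    ∀ᶠ ε in 𝓝[Set.Ici 0] 0,
      lasso lam (ENNReal.ofReal (1 - ε) • H + ENNReal.ofReal ε • Measure.dirac p) =
        softThreshold lam (AffineMap.lineMap (k := ℝ) (∫ z, z.1 * z.2 ∂H) (p.1 * p.2) ε) /
          AffineMap.lineMap (k := ℝ) (∫ z, z.1 ^ 2 ∂H) (p.1 ^ 2) ε := by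
  have hpos : ∀ᶠ ε in 𝓝 0, 0 < AffineMap.lineMap (k := ℝ) (∫ z, z.1 ^ 2 ∂H) (p.1 ^ 2) ε :=
    AffineMap.hasDerivAt_lineMap.continuousAt.eventually
      (eventually_gt_nhds (by rwa [AffineMap.lineMap_apply_zero]))
  filter_upwards [Ico_mem_nhdsGE one_pos, nhdsWithin_le_nhds hpos] with ε ⟨hε₀, hε₁⟩ hεpos
  rw [← integral_contamination hxx p hε₀ hε₁.le] at hεpos
  rw [lasso_eq_softThreshold_div hεpos, integral_contamination hxy p hε₀ hε₁.le,
    integral_contamination hxx p hε₀ hε₁.le]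

section LinearModel

variable {Ω : Type*} [MeasurableSpace Ω] {μ : Measure Ω} {x e : Ω → ℝ}

lemma measurable_linearModel (hxm : Measurable x) (hem : Measurable e) (β : ℝ) :
    Measurable fun ω => (x ω, x ω * β + e ω) :=
  hxm.prodMk ((hxm.mul_const β).add hem)

lemma integrable_fst_sq_map_linearModel (hxm : Measurable x) (hem : Measurable e) (β : ℝ)
    (hx2 : Integrable (fun ω => x ω ^ 2) μ) :
    Integrable (fun z : ℝ × ℝ => z.1 ^ 2) (μ.map fun ω => (x ω, x ω * β + e ω)) := by
  rw [integrable_map_measure (by fun_prop) (measurable_linearModel hxm hem β).aemeasurable]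
  exact hx2

lemma integral_fst_sq_map_linearModel (hxm : Measurable x) (hem : Measurable e) (β : ℝ) :
    ∫ z : ℝ × ℝ, z.1 ^ 2 ∂(μ.map fun ω => (x ω, x ω * β + e ω)) = ∫ ω, x ω ^ 2 ∂μ :=
  integral_map (measurable_linearModel hxm hem β).aemeasurable (by fun_prop)

lemma integrable_fst_mul_snd_map_linearModel (hxm : Measurable x) (hem : Measurable e) (β : ℝ)
    (hx2 : Integrable (fun ω => x ω ^ 2) μ) (hxe : Integrable (fun ω => x ω * e ω) μ) :
    Integrable (fun z : ℝ × ℝ => z.1 * z.2) (μ.map fun ω => (x ω, x ω * β + e ω)) := by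
  rw [integrable_map_measure (by fun_prop) (measurable_linearModel hxm hem β).aemeasurable]
  refine ((hx2.const_mul β).add hxe).congr (ae_of_all _ fun ω => ?_)
  simp only [Function.comp_apply, Pi.add_apply]
  ring

lemma integral_fst_mul_snd_map_linearModel (hxm : Measurable x) (hem : Measurable e)
    (hind : IndepFun x e μ) (hx2 : Integrable (fun ω => x ω ^ 2) μ)
    (hxe : Integrable (fun ω => x ω * e ω) μ) (hmean : ∫ ω, e ω ∂μ = 0) (β : ℝ) :
    ∫ z : ℝ × ℝ, z.1 * z.2 ∂(μ.map fun ω => (x ω, x ω * β + e ω)) = β * ∫ ω, x ω ^ 2 ∂μ := by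
  have hxe0 : ∫ ω, x ω * e ω ∂μ = 0 := by
    simpa [hmean] using hind.integral_mul_eq_mul_integral hxm.aestronglyMeasurable
      hem.aestronglyMeasurable
  rw [integral_map (measurable_linearModel hxm hem β).aemeasurable (by fun_prop)]
  calc ∫ ω, x ω * (x ω * β + e ω) ∂μ = ∫ ω, (β * x ω ^ 2 + x ω * e ω) ∂μ :=
        integral_congr_ae (ae_of_all _ fun ω => by ring)
    _ = β * ∫ ω, x ω ^ 2 ∂μ := by
        rw [integral_add (hx2.const_mul β) hxe, integral_const_mul, hxe0, add_zero]

end LinearModel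

theorem influence_function_lasso_simple_general
    {Ω : Type*} [MeasurableSpace Ω] (μ : Measure Ω)
    (x e : Ω → ℝ) (hxm : Measurable x) (hem : Measurable e)
    (hind : IndepFun x e μ)
    (hx2 : Integrable (fun ω => (x ω) ^ 2) μ)
    (hxe : Integrable (fun ω => x ω * e ω) μ)
    (hmean : ∫ ω, e ω ∂μ = 0)
    (Ex : ℝ) (hEx : Ex = ∫ ω, (x ω) ^ 2 ∂μ) (hExpos : 0 < Ex)
    (lam : ℝ) (hlam : 0 ≤ lam)
    (β₀ : ℝ)
    (H₀ : Measure (ℝ × ℝ)) (hH₀ : H₀ = μ.map (fun ω => (x ω, x ω * β₀ + e ω)))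
    (x₀ y₀ : ℝ)
    (Hmix : ℝ → Measure (ℝ × ℝ))
    (hHmix : ∀ ε : ℝ,
      Hmix ε = ENNReal.ofReal (1 - ε) • H₀ + ENNReal.ofReal ε • Measure.dirac (x₀, y₀))
    (L : Measure (ℝ × ℝ) → ℝ)
    (hL : ∀ ν : Measure (ℝ × ℝ),
      L ν = Real.sign (∫ z, z.1 * z.2 ∂ν) *
        max (|∫ z, z.1 * z.2 ∂ν| / (∫ z, z.1 ^ 2 ∂ν) - lam / (∫ z, z.1 ^ 2 ∂ν)) 0) :
    (|β₀| < lam / Ex →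
      (∀ᶠ ε in nhdsWithin (0 : ℝ) (Set.Ici 0), L (Hmix ε) = 0) ∧
        HasDerivWithinAt (fun ε : ℝ => L (Hmix ε)) 0 (Set.Ici 0) 0) ∧
    (lam / Ex < |β₀| →
      HasDerivWithinAt (fun ε : ℝ => L (Hmix ε))
        (x₀ * (y₀ - β₀ * x₀) / Ex - lam * (Ex - x₀ ^ 2) / Ex ^ 2 * Real.sign β₀)
        (Set.Ici 0) 0) := by
  have hlasso : L = lasso lam := funext hL
  have hxy₀ : ∫ z, z.1 * z.2 ∂H₀ = β₀ * Ex := by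
    rw [hH₀, integral_fst_mul_snd_map_linearModel hxm hem hind hx2 hxe hmean, hEx]
  have hxx₀ : ∫ z, z.1 ^ 2 ∂H₀ = Ex := by rw [hH₀, integral_fst_sq_map_linearModel hxm hem, hEx]
  have hpath := lasso_contamination_eventuallyEq lam
    (hH₀ ▸ integrable_fst_mul_snd_map_linearModel hxm hem β₀ hx2 hxe)
    (hH₀ ▸ integrable_fst_sq_map_linearModel hxm hem β₀ hx2) (hxx₀ ▸ hExpos) (x₀, y₀)
  simp only [hxy₀, hxx₀, ← hHmix, ← hlasso] at hpath
  set A : ℝ → ℝ := ⇑(AffineMap.lineMap (k := ℝ) (β₀ * Ex) (x₀ * y₀))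
  set B : ℝ → ℝ := ⇑(AffineMap.lineMap (k := ℝ) Ex (x₀ ^ 2))
  have hA : HasDerivAt A (x₀ * y₀ - β₀ * Ex) 0 := AffineMap.hasDerivAt_lineMap
  have hB : HasDerivAt B (x₀ ^ 2 - Ex) 0 := AffineMap.hasDerivAt_lineMap
  have hA0 : A 0 = β₀ * Ex := AffineMap.lineMap_apply_zero _ _
  have hB0 : B 0 = Ex := AffineMap.lineMap_apply_zero _ _
  have hAbs0 : |A 0| = |β₀| * Ex := by rw [hA0, abs_mul, abs_of_pos hExpos]
  constructor
  · intro hlt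
    have habs : |A 0| < lam := by rwa [hAbs0, ← lt_div_iff₀ hExpos]
    have hzero : ∀ᶠ ε in 𝓝[Set.Ici 0] 0, L (Hmix ε) = 0 := by
      filter_upwards [hpath, nhdsWithin_le_nhds
        (hA.continuousAt.eventually (softThreshold_eventuallyEq_zero habs))] with ε hLε hSε
      rw [hLε, hSε, Pi.zero_apply, zero_div]
    exact ⟨hzero, (hasDerivWithinAt_const _ _ 0).congr_of_eventuallyEq hzero
      (hzero.self_of_nhdsWithin Set.self_mem_Ici)⟩
  · intro hgt
    have habs : lam < |A 0| := by rwa [hAbs0, ← div_lt_iff₀ hExpos]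
    have hderiv := ((hasDerivAt_softThreshold hlam habs).comp 0 hA).div hB (hB0 ▸ hExpos.ne')
    refine (hderiv.hasDerivWithinAt.congr_of_eventuallyEq hpath
      (hpath.self_of_nhdsWithin Set.self_mem_Ici)).congr_deriv ?_
    rw [Function.comp_apply, softThreshold_of_le_abs habs.le, hA0, hB0,
      Real.sign_mul_of_pos hExpos]
    field_simp
    ring

/-- Lemma 2 of the paper: influence function of the lasso functional
in simple regression. With `L(H) = sign(E_H[xy])·max(|E_H[xy]|/E_H[x²] - λ/E_H[x²], 0)`
and `H_ε = (1-ε)H₀ + ε·δ_{(x₀,y₀)}`: (i) if `|β₀| < λ/E_{H₀}[x²]` then `ε ↦ L(H_ε)` is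
constantly `0` in a right-neighborhood of `0` and its derivative at `0` is `0`;
(ii) if `|β₀| > λ/E_{H₀}[x²]` then it is differentiable at `0` with derivative
`x₀(y₀ - β₀x₀)/E[x²] - λ(E[x²] - x₀²)/E[x²]²·sign(β₀)`. -/
theorem influence_function_lasso_simple
    {Ω : Type*} [MeasurableSpace Ω] (μ : Measure Ω) [IsProbabilityMeasure μ]
    (x e : Ω → ℝ) (hxm : Measurable x) (hem : Measurable e)
    (hind : IndepFun x e μ)
    (hx1 : Integrable x μ) (he1 : Integrable e μ)
    (hx2 : Integrable (fun ω => (x ω) ^ 2) μ)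
    (he2 : Integrable (fun ω => (e ω) ^ 2) μ)
    (hxe : Integrable (fun ω => x ω * e ω) μ)
    (hmean : ∫ ω, e ω ∂μ = 0)
    (Ex : ℝ) (hEx : Ex = ∫ ω, (x ω) ^ 2 ∂μ) (hExpos : 0 < Ex)
    (lam : ℝ) (hlam : 0 ≤ lam)
    (β₀ : ℝ)
    (H₀ : Measure (ℝ × ℝ)) (hH₀ : H₀ = μ.map (fun ω => (x ω, x ω * β₀ + e ω)))
    (x₀ y₀ : ℝ)
    (Hmix : ℝ → Measure (ℝ × ℝ))
    (hHmix : ∀ ε : ℝ,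
      Hmix ε = ENNReal.ofReal (1 - ε) • H₀ + ENNReal.ofReal ε • Measure.dirac (x₀, y₀))
    (L : Measure (ℝ × ℝ) → ℝ)
    (hL : ∀ ν : Measure (ℝ × ℝ),
      L ν = Real.sign (∫ z, z.1 * z.2 ∂ν) *
        max (|∫ z, z.1 * z.2 ∂ν| / (∫ z, z.1 ^ 2 ∂ν) - lam / (∫ z, z.1 ^ 2 ∂ν)) 0) :
    (|β₀| < lam / Ex →
      (∀ᶠ ε in nhdsWithin (0 : ℝ) (Set.Ici 0), L (Hmix ε) = 0) ∧
        HasDerivWithinAt (fun ε : ℝ => L (Hmix ε)) 0 (Set.Ici 0) 0) ∧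
    (lam / Ex < |β₀| →
      HasDerivWithinAt (fun ε : ℝ => L (Hmix ε))
        (x₀ * (y₀ - β₀ * x₀) / Ex - lam * (Ex - x₀ ^ 2) / Ex ^ 2 * Real.sign β₀)
        (Set.Ici 0) 0) :=
  influence_function_lasso_simple_general μ x e hxm hem hind hx2 hxe hmean Ex hEx hExpos lam hlam β₀
    H₀ hH₀ x₀ y₀ Hmix hHmix L hL
end

section
/- Let s > 0, α ∈ (0, 1), q_α = Φ⁻¹((α + 1)/2), and fix r ∈ ℝ with |r| ≠ s·q_α. For ε ∈ [0, 1) define q(ε) as the α-quantile of |W_ε|, where W_ε has the mixture distribution (1 − ε)·N(0, s²) + ε·δ_r, i.e., q(ε) is the smallest q ≥ 0 with (1 − ε)(2Φ(q/s) − 1) + ε·1{|r| ≤ q} ≥ α. Then q is differentiable from the right at ε = 0 with q′(0) = s·(α − 1{|r| ≤ s·q_α}) / (2φ(q_α)). -/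
/-!
Since `|r| ≠ s q_α` and `q(ε)` stays close to `s q_α`, the indicator `1{|r| ≤ q(ε)}` keeps its
value `c` at `ε = 0` for all small `ε`. The contaminated cdf is then strictly increasing, so
`q(ε)` is the solution of `Φ(q(ε)/s) = H(ε) := ((α - εc)/(1 - ε) + 1)/2`, i.e. `q = s · Φ⁻¹ ∘ H`
with `Φ⁻¹` the local inverse of `Φ` at `q_α`. The chain rule gives
`q'(0) = s H'(0) / φ(q_α) = s (α - c) / (2 φ(q_α))`.
-/

open MeasureTheory ProbabilityTheory Set Filter Topology

section IntegralIic

variable {f : ℝ → ℝ}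

lemma hasDerivAt_integral_Iic (hf : Integrable f) (hfc : Continuous f) (t : ℝ) :
    HasDerivAt (fun u => ∫ x in Iic u, f x) (f t) t := by
  have hsplit : (fun u => ∫ x in Iic u, f x) = fun u => (∫ x in Iic 0, f x) + ∫ x in 0..u, f x := by
    ext u
    rw [← intervalIntegral.integral_Iic_sub_Iic hf.integrableOn hf.integrableOn]
    ring
  rw [hsplit]
  exact (intervalIntegral.integral_hasDerivAt_right hf.intervalIntegrable
    (hfc.stronglyMeasurableAtFilter _ _) hfc.continuousAt).const_add _

lemma strictMono_integral_Iic (hf : Integrable f) (hpos : ∀ x, 0 < f x) :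
    StrictMono fun u => ∫ x in Iic u, f x := by
  intro a b hab
  have hdiff := intervalIntegral.integral_Iic_sub_Iic (f := f) (μ := volume)
    hf.integrableOn hf.integrableOn (a := a) (b := b)
  have hpos' := intervalIntegral.intervalIntegral_pos_of_pos hf.intervalIntegrable hpos hab
  dsimp only
  linarith

lemma integral_Iic_zero_of_even (hf : Integrable f) (heven : ∀ x, f (-x) = f x) :
    ∫ x in Iic 0, f x = (∫ x, f x) / 2 := by
  have hreflect : ∫ x in Iic 0, f x = ∫ x in Ioi 0, f x := by
    simpa only [heven, neg_zero] using integral_comp_neg_Iic (0 : ℝ) f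
  have hsum := integral_add_compl (measurableSet_Iic (a := (0 : ℝ))) hf
  rw [compl_Iic] at hsum
  linarith

end IntegralIic

lemma continuous_gaussianPDFReal (μ : ℝ) (v : NNReal) : Continuous (gaussianPDFReal μ v) := by
  unfold gaussianPDFReal
  fun_prop

lemma cdf_gaussianReal_eq_integral (μ : ℝ) {v : NNReal} (hv : v ≠ 0) (t : ℝ) :
    cdf (gaussianReal μ v) t = ∫ x in Iic t, gaussianPDFReal μ v x := by
  rw [cdf_eq_real, measureReal_def, gaussianReal_apply_eq_integral μ hv,
    ENNReal.toReal_ofReal (integral_nonneg fun x => gaussianPDFReal_nonneg _ _ _)]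

lemma strictMono_cdf_gaussianReal (μ : ℝ) {v : NNReal} (hv : v ≠ 0) :
    StrictMono (cdf (gaussianReal μ v)) := by
  simpa only [funext (cdf_gaussianReal_eq_integral μ hv)] using
    strictMono_integral_Iic (integrable_gaussianPDFReal μ v) (gaussianPDFReal_pos μ v · hv)

lemma hasStrictDerivAt_cdf_gaussianReal (μ : ℝ) {v : NNReal} (hv : v ≠ 0) (t : ℝ) :
    HasStrictDerivAt (cdf (gaussianReal μ v)) (gaussianPDFReal μ v t) t := by
  refine hasStrictDerivAt_of_hasDerivAt_of_continuousAt (Eventually.of_forall fun u => ?_)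
    (continuous_gaussianPDFReal μ v).continuousAt
  simpa only [funext (cdf_gaussianReal_eq_integral μ hv)] using
    hasDerivAt_integral_Iic (integrable_gaussianPDFReal μ v) (continuous_gaussianPDFReal μ v) u

lemma cdf_gaussianReal_zero {v : NNReal} (hv : v ≠ 0) : cdf (gaussianReal 0 v) 0 = 1 / 2 := by
  rw [cdf_gaussianReal_eq_integral 0 hv, integral_Iic_zero_of_even (integrable_gaussianPDFReal 0 v)
    (fun x => by simp [gaussianPDFReal]), integral_gaussianPDFReal_eq_one 0 hv]

lemma sInf_nonneg_le_eq_of_strictMono {F : ℝ → ℝ} (hF : StrictMono F) {a t₀ : ℝ} (ht₀ : 0 ≤ t₀)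
    (hFt₀ : F t₀ = a) : sInf {t | 0 ≤ t ∧ a ≤ F t} = t₀ := by
  have hset : {t | 0 ≤ t ∧ a ≤ F t} = Ici t₀ := by
    ext t
    simp only [mem_ofPred_eq, mem_Ici, ← hFt₀, hF.le_iff_le]
    exact ⟨And.right, fun h => ⟨ht₀.trans h, h⟩⟩
  rw [hset, csInf_Ici]

section Contamination

variable {Φ : ℝ → ℝ} {s ε : ℝ}

lemma strictMono_contaminatedCDF (hΦ : StrictMono Φ) (hs : 0 < s) (hε₀ : 0 ≤ ε) (hε₁ : ε < 1)
    (r : ℝ) :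
    StrictMono fun t => (1 - ε) * (2 * Φ (t / s) - 1) + ε * (if |r| ≤ t then 1 else 0) := by
  have hnormal : StrictMono fun t => (1 - ε) * (2 * Φ (t / s) - 1) := fun a b hab => by
    have := hΦ (div_lt_div_of_pos_right hab hs)
    dsimp only
    nlinarith
  have hatom : Monotone fun t : ℝ => ε * (if |r| ≤ t then 1 else 0) := fun a b hab => by
    dsimp only
    split_ifs <;> linarith
  exact hnormal.add_monotone hatom

/-- The level `Φ (q ε / s)` has to reach when the atom's indicator is frozen at `c`. -/
noncomputable def contaminationLevel (α c ε : ℝ) : ℝ := ((α - ε * c) / (1 - ε) + 1) / 2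

lemma contaminationLevel_zero (α c : ℝ) : contaminationLevel α c 0 = (α + 1) / 2 := by
  simp [contaminationLevel]

lemma hasDerivAt_contaminationLevel (α c : ℝ) :
    HasDerivAt (contaminationLevel α c) ((α - c) / 2) 0 := by
  have hnum : HasDerivAt (fun ε : ℝ => α - ε * c) (-c) 0 := by
    simpa using ((hasDerivAt_id (0 : ℝ)).mul_const c).const_sub α
  have hden : HasDerivAt (fun ε : ℝ => 1 - ε) (-1) 0 := by
    simpa using (hasDerivAt_id (0 : ℝ)).const_sub 1
  exact (((hnum.div hden (by norm_num)).add_const 1).div_const 2).congr_deriv (by ring)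

lemma contaminationLevel_spec (α c : ℝ) (hε : ε ≠ 1) :
    (1 - ε) * (2 * contaminationLevel α c ε - 1) + ε * c = α := by
  have hε' : 1 - ε ≠ 0 := sub_ne_zero.mpr hε.symm
  unfold contaminationLevel
  field_simp
  ring

lemma contaminatedQuantile_eq (hΦ : StrictMono Φ) (hs : 0 < s) (hε₀ : 0 ≤ ε) (hε₁ : ε < 1)
    {α c r x : ℝ} (hx : 0 ≤ x) (hΦx : Φ x = contaminationLevel α c ε)
    (hc : (if |r| ≤ s * x then 1 else 0) = c) :
    sInf {t : ℝ | 0 ≤ t ∧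
      α ≤ (1 - ε) * (2 * Φ (t / s) - 1) + ε * (if |r| ≤ t then 1 else 0)} = s * x := by
  refine sInf_nonneg_le_eq_of_strictMono (strictMono_contaminatedCDF hΦ hs hε₀ hε₁ r)
    (by positivity) ?_
  simp only [mul_div_cancel_left₀ x hs.ne', hΦx, hc]
  exact contaminationLevel_spec α c hε₁.ne

end Contamination

lemma eventually_le_iff_of_ne {g : ℝ → ℝ} {a b : ℝ} (hg : ContinuousAt g a) (hb : b ≠ g a) :
    ∀ᶠ x in 𝓝 a, (b ≤ g x ↔ b ≤ g a) := by
  rcases hb.lt_or_gt with hlt | hgt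
  · filter_upwards [continuousAt_const.eventually_lt hg hlt] with x hx
    exact iff_of_true hx.le hlt.le
  · filter_upwards [hg.eventually_lt continuousAt_const hgt] with x hx
    exact iff_of_false hx.not_ge hgt.not_ge

lemma HasStrictDerivAt.exists_hasDerivAt_solution {Φ H : ℝ → ℝ} {a b Φ' H' : ℝ}
    (hΦ : HasStrictDerivAt Φ Φ' a) (hΦ' : Φ' ≠ 0) (hH : HasDerivAt H H' b) (hHb : H b = Φ a) :
    ∃ x : ℝ → ℝ, HasDerivAt x (Φ'⁻¹ * H') b ∧ x b = a ∧ ∀ᶠ ε in 𝓝 b, Φ (x ε) = H ε := by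
  have hG : HasDerivAt (hΦ.localInverse Φ Φ' a hΦ') Φ'⁻¹ (H b) :=
    hHb ▸ (hΦ.to_localInverse hΦ').hasDerivAt
  refine ⟨_, hG.comp b hH, ?_, ?_⟩
  · simpa only [Function.comp_apply, hHb] using (hΦ.eventually_left_inverse hΦ').self_of_nhds
  · exact hH.continuousAt.tendsto.eventually (hHb ▸ hΦ.eventually_right_inverse hΦ')

/-- derivative of the α-quantile of the folded contaminated normal
distribution. With `q(ε)` the smallest `q ≥ 0` such that
`(1-ε)(2Φ(q/s) - 1) + ε·1{|r| ≤ q} ≥ α`, the map `q` is right differentiable at `0`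
with derivative `s·(α - 1{|r| ≤ s·q_α})/(2φ(q_α))`. -/
theorem quantile_derivative_under_contamination
    (s : ℝ) (hs : 0 < s)
    (α : ℝ) (hα : α ∈ Set.Ioo (0 : ℝ) 1)
    (Phi : ℝ → ℝ) (hPhi : ∀ t : ℝ, Phi t = ((gaussianReal 0 1) (Set.Iic t)).toReal)
    (qα : ℝ) (hqα : Phi qα = (α + 1) / 2)
    (r : ℝ) (hr : |r| ≠ s * qα)
    (q : ℝ → ℝ)
    (hq : ∀ ε : ℝ, q ε = sInf {t : ℝ | 0 ≤ t ∧
      α ≤ (1 - ε) * (2 * Phi (t / s) - 1) + ε * (if |r| ≤ t then 1 else 0)}) :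
    HasDerivWithinAt q
      (s * (α - (if |r| ≤ s * qα then 1 else 0)) / (2 * gaussianPDFReal 0 1 qα))
      (Set.Ici 0) 0 := by
  obtain rfl : Phi = cdf (gaussianReal 0 1) := funext fun t => by rw [hPhi, cdf_eq_real]; rfl
  have hΦ := strictMono_cdf_gaussianReal 0 one_ne_zero
  have hqα_pos : 0 < qα := by
    rw [← hΦ.lt_iff_lt, cdf_gaussianReal_zero one_ne_zero, hqα]
    linarith [hα.1]
  set c : ℝ := if |r| ≤ s * qα then 1 else 0
  obtain ⟨x, hx, hx0, hΦx⟩ :=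
    (hasStrictDerivAt_cdf_gaussianReal 0 one_ne_zero qα).exists_hasDerivAt_solution
      (gaussianPDFReal_pos 0 1 qα one_ne_zero).ne' (hasDerivAt_contaminationLevel α c)
      (by rw [contaminationLevel_zero, hqα])
  have hx_tendsto : Tendsto x (𝓝 0) (𝓝 qα) := hx0 ▸ hx.continuousAt.tendsto
  have hc : ∀ᶠ ε in 𝓝 (0 : ℝ), (if |r| ≤ s * x ε then 1 else 0) = c :=
    hx_tendsto.eventually <| (eventually_le_iff_of_ne (by fun_prop) hr).mono
      fun _ hiff => if_congr hiff rfl rfl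
  have hq_eq : q =ᶠ[𝓝[Ici 0] 0] fun ε => s * x ε := by
    filter_upwards [self_mem_nhdsWithin, nhdsWithin_le_nhds (eventually_lt_nhds one_pos),
      nhdsWithin_le_nhds (hx_tendsto.eventually (eventually_gt_nhds hqα_pos)),
      nhdsWithin_le_nhds hΦx, nhdsWithin_le_nhds hc] with ε hε₀ hε₁ hxε hΦxε hcε
    rw [hq]
    exact contaminatedQuantile_eq hΦ hs hε₀ hε₁ hxε.le hΦxε hcε
  refine (((hx.const_mul s).hasDerivWithinAt).congr_of_eventuallyEq hq_eq
    (hq_eq.eq_of_nhdsWithin self_mem_Ici)).congr_deriv ?_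
  field_simp
end
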